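/- arXiv:1103.3890 — 3 statements merged into one kernel-verified Lean document; each statement's English description precedes it below -/
import Mathlib

section
/- Exclusion rule (II): let Q be a mixed strategy of Host and let P be a best response to Q, i.e. E(P, Q) ≥ E(P', Q) for every mixed strategy P'. If Q 1 > 0 then P 2 = 0 (if 1R has positive probability, the best response excludes 1NS); if Q 3 > 0 then P 6 = 0 (2R excludes 2NS); if Q 5 > 0 then P 10 = 0 (3R excludes 3NS). -/
open Finset

/-- Contestant's payoff matrix for the Monty Hall zero-sum game.
Rows: 1SS,1SN,1NS,1NN,2SS,2SN,2NS,2NN,3SS,3SN,3NS,3NN.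
Columns: 1L,1R,2L,2R,3L,3R. -/
def C : Fin 12 → Fin 6 → ℝ :=
  ![![0,0,1,1,1,1],
    ![0,1,0,0,1,1],
    ![1,0,1,1,0,0],
    ![1,1,0,0,0,0],
    ![1,1,0,0,1,1],
    ![0,0,0,1,1,1],
    ![1,1,1,0,0,0],
    ![0,0,1,1,0,0],
    ![1,1,1,1,0,0],
    ![0,0,1,1,0,1],
    ![1,1,0,0,1,0],
    ![0,0,0,0,1,1]]

/-- A mixed strategy for Contestant. -/
def IsMixedC (P : Fin 12 → ℝ) : Prop := (∀ i, 0 ≤ P i) ∧ ∑ i, P i = 1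

/-- A mixed strategy for Host. -/
def IsMixedH (Q : Fin 6 → ℝ) : Prop := (∀ j, 0 ≤ Q j) ∧ ∑ j, Q j = 1

/-- Expected payoff (Contestant's winning probability) under profile (P,Q). -/
def E (P : Fin 12 → ℝ) (Q : Fin 6 → ℝ) : ℝ := ∑ i, ∑ j, P i * C i j * Q j

open Matrix

/-- Moving the weight `P i` onto the coordinate `k` would gain `P i * (r k - r i)`. -/
theorem eq_zero_of_forall_dotProduct_le {ι : Type*} [Fintype ι] [DecidableEq ι] {r P : ι → ℝ}
    (hP : P ∈ stdSimplex ℝ ι) (hmax : ∀ P' ∈ stdSimplex ℝ ι, P' ⬝ᵥ r ≤ P ⬝ᵥ r)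
    {i k : ι} (hlt : r i < r k) : P i = 0 := by
  have hik : i ≠ k := hlt.ne ∘ congrArg r
  set P' := P + Pi.single k (P i) - Pi.single i (P i)
  have hP' : P' ∈ stdSimplex ℝ ι := by
    refine ⟨fun j => ?_, ?_⟩
    · by_cases hj : j = i
      · subst hj
        simp [P', hik]
      · have hPi := hP.1 i
        have hPj := hP.1 j
        simp only [P', Pi.sub_apply, Pi.add_apply, Pi.single_apply, hj, if_false]
        split_ifs <;> linarith
    · simp [P', Finset.sum_sub_distrib, Finset.sum_add_distrib, hP.2]
  have hgain : P' ⬝ᵥ r = P ⬝ᵥ r + P i * (r k - r i) := by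
    simp only [P', sub_dotProduct, add_dotProduct, single_dotProduct]
    ring
  have hloss : P i * (r k - r i) ≤ 0 := by linarith [hmax P' hP']
  exact le_antisymm (nonpos_of_mul_nonpos_left hloss (sub_pos.2 hlt)) (hP.1 i)

lemma E_eq_dotProduct_mulVec (P : Fin 12 → ℝ) (Q : Fin 6 → ℝ) : E P Q = P ⬝ᵥ (C *ᵥ Q) := by
  simp only [E, dotProduct, mulVec, Finset.mul_sum, mul_assoc]

/-- Row 3SS agrees with 1NS except on 1R and with 2NS except on 2R, and row 2SS agrees with
3NS except on 3R, where in each case the former wins and the latter loses. -/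
lemma C_mulVec_sub (Q : Fin 6 → ℝ) :
    (C *ᵥ Q) 8 - (C *ᵥ Q) 2 = Q 1 ∧ (C *ᵥ Q) 8 - (C *ᵥ Q) 6 = Q 3 ∧
      (C *ᵥ Q) 4 - (C *ᵥ Q) 10 = Q 5 := by
  simp [mulVec, dotProduct, Fin.sum_univ_six, C]

/-- Exclusion rule (II): if XR has positive probability in Q, then every best
response to Q excludes XNS. -/
theorem exclusion_rule_II :
    ∀ (Q : Fin 6 → ℝ) (P : Fin 12 → ℝ), IsMixedH Q → IsMixedC P →
      (∀ P' : Fin 12 → ℝ, IsMixedC P' → E P Q ≥ E P' Q) →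
      (Q 1 > 0 → P 2 = 0) ∧ (Q 3 > 0 → P 6 = 0) ∧ (Q 5 > 0 → P 10 = 0) := by
  intro Q P _ hP hbest
  have hmax : ∀ P' ∈ stdSimplex ℝ (Fin 12), P' ⬝ᵥ (C *ᵥ Q) ≤ P ⬝ᵥ (C *ᵥ Q) := fun P' hP' => by
    simpa only [E_eq_dotProduct_mulVec] using hbest P' hP'
  obtain ⟨h1R, h2R, h3R⟩ := C_mulVec_sub Q
  refine ⟨fun hQ => ?_, fun hQ => ?_, fun hQ => ?_⟩
  · exact eq_zero_of_forall_dotProduct_le hP hmax (k := 8) (by linarith)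
  · exact eq_zero_of_forall_dotProduct_le hP hmax (k := 8) (by linarith)
  · exact eq_zero_of_forall_dotProduct_le hP hmax (k := 4) (by linarith)
end

section
/- Nash equilibria with fully supported Host strategy avoid Notswitch (Theorem): let H : Fin 12 → Fin 6 → ℝ be any Host payoff matrix and let (P', Q') be a Nash equilibrium of the bimatrix game (C, H). If Q' is fully supported (Q' j > 0 for all j ∈ Fin 6), then P' i = 0 for every i ∉ {0, 4, 8}; that is, P' is a mixture of the always-switch strategies 1SS, 2SS, 3SS. -/
open Finset

/-- Expected payoff for payoff matrix M under profile (P,Q). -/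
def EM (M : Fin 12 → Fin 6 → ℝ) (P : Fin 12 → ℝ) (Q : Fin 6 → ℝ) : ℝ :=
  ∑ i, ∑ j, P i * M i j * Q j

/-- Nash equilibrium of the bimatrix game (C, H). -/
def IsNash (H : Fin 12 → Fin 6 → ℝ) (P' : Fin 12 → ℝ) (Q' : Fin 6 → ℝ) : Prop :=
  IsMixedC P' ∧ IsMixedH Q' ∧
    (∀ P, IsMixedC P → EM C P' Q' ≥ EM C P Q') ∧
    (∀ Q, IsMixedH Q → EM H P' Q' ≥ EM H P' Q)

/-!
Against a fully supported Host strategy, a row that is weakly dominated (never better, sometimes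
strictly worse) earns strictly less than its dominator, so a best-responding Contestant gives it
probability zero. Every strategy other than 1SS, 2SS, 3SS is weakly dominated by one of these three.
-/

theorem eq_zero_of_forall_le_sum_mul {ι : Type*} [Fintype ι] {p v : ι → ℝ}
    (hp0 : ∀ i, 0 ≤ p i) (hp1 : ∑ i, p i = 1) (hv : ∀ k, v k ≤ ∑ i, p i * v i)
    {i k : ι} (hik : v i < v k) : p i = 0 := by
  set V := ∑ i, p i * v i
  have hgap : ∑ l, p l * (V - v l) = 0 := by
    simp only [mul_sub, sum_sub_distrib, ← sum_mul, hp1, one_mul, V, sub_self]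
  have hterm := (sum_eq_zero_iff_of_nonneg fun l _ => mul_nonneg (hp0 l) (sub_nonneg.2 (hv l))).1
    hgap i (mem_univ i)
  exact (mul_eq_zero.1 hterm).resolve_right (by linarith [hv k])

def WeaklyDominates {ι κ : Type*} (M : ι → κ → ℝ) (k i : ι) : Prop :=
  (∀ j, M i j ≤ M k j) ∧ ∃ j, M i j < M k j

theorem WeaklyDominates.sum_mul_lt {ι κ : Type*} [Fintype κ] {M : ι → κ → ℝ} {k i : ι}
    (h : WeaklyDominates M k i) {Q : κ → ℝ} (hQ : ∀ j, 0 < Q j) :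
    ∑ j, M i j * Q j < ∑ j, M k j * Q j := by
  obtain ⟨hle, j, hlt⟩ := h
  exact sum_lt_sum (fun j _ => mul_le_mul_of_nonneg_right (hle j) (hQ j).le)
    ⟨j, mem_univ j, mul_lt_mul_of_pos_right hlt (hQ j)⟩

theorem exists_weaklyDominates_C {i : Fin 12} (hi : i ∉ ({0, 4, 8} : Set (Fin 12))) :
    ∃ k, WeaklyDominates C k i := by
  refine ⟨![0, 4, 8, 8, 4, 0, 8, 0, 8, 0, 4, 0] i, ?_⟩
  fin_cases i <;> simp [WeaklyDominates, Fin.forall_fin_succ, Fin.exists_fin_succ, C] at hi ⊢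

theorem EM_eq_sum_mul (M : Fin 12 → Fin 6 → ℝ) (P : Fin 12 → ℝ) (Q : Fin 6 → ℝ) :
    EM M P Q = ∑ i, P i * ∑ j, M i j * Q j := by
  simp only [EM, mul_sum, mul_assoc]

theorem EM_single (M : Fin 12 → Fin 6 → ℝ) (k : Fin 12) (Q : Fin 6 → ℝ) :
    EM M (Pi.single k 1) Q = ∑ j, M k j * Q j := by
  simp [EM_eq_sum_mul, Pi.single_apply]

theorem isMixedC_single (k : Fin 12) : IsMixedC (Pi.single k 1) :=
  ⟨fun j => by by_cases h : j = k <;> simp [h], by simp⟩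

theorem IsNash.eq_zero_of_payoff_lt {H : Fin 12 → Fin 6 → ℝ} {P' : Fin 12 → ℝ} {Q' : Fin 6 → ℝ}
    (h : IsNash H P' Q') {i k : Fin 12} (hik : ∑ j, C i j * Q' j < ∑ j, C k j * Q' j) :
    P' i = 0 := by
  obtain ⟨⟨hP0, hP1⟩, -, hbest, -⟩ := h
  refine eq_zero_of_forall_le_sum_mul (v := fun l => ∑ j, C l j * Q' j) hP0 hP1
    (fun l => ?_) hik
  simpa only [EM_single, ← EM_eq_sum_mul] using hbest _ (isMixedC_single l)

/-- In any Nash equilibrium of the bimatrix game (C, H) in which Host's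
strategy is fully supported, Contestant mixes only the always-switch
strategies 1SS, 2SS, 3SS (rows 0, 4, 8). -/
theorem nash_fully_supported_always_switch :
    ∀ (H : Fin 12 → Fin 6 → ℝ) (P' : Fin 12 → ℝ) (Q' : Fin 6 → ℝ),
      IsNash H P' Q' → (∀ j : Fin 6, Q' j > 0) →
      ∀ i : Fin 12, i ∉ ({0, 4, 8} : Set (Fin 12)) → P' i = 0 := by
  intro H P' Q' hN hQ i hi
  obtain ⟨k, hki⟩ := exists_weaklyDominates_C hi
  exact hN.eq_zero_of_payoff_lt (hki.sum_mul_lt hQ)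
end

section
/- In every Nash equilibrium Contestant wins with probability at least the minimax value: for any Host payoff matrix H : Fin 12 → Fin 6 → ℝ and any Nash equilibrium (P', Q') of the bimatrix game (C, H), the Contestant's expected payoff satisfies E_C(P', Q') ≥ 2/3. -/
open Finset

/-!
Choosing a door uniformly at random and always switching wins against every pure
strategy of Host with probability exactly 2/3, hence against every mixed one. An
equilibrium strategy of Contestant is a best response to Host's, so it does at least as well.
-/

theorem sum_mul_sum_mul_eq_of_forall {ι κ : Type*} [Fintype ι] [Fintype κ]
    (M : ι → κ → ℝ) (P : ι → ℝ) (Q : κ → ℝ) (v : ℝ)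
    (hcol : ∀ j, ∑ i, P i * M i j = v) (hQ : ∑ j, Q j = 1) :
    ∑ i, ∑ j, P i * M i j * Q j = v := by
  calc ∑ i, ∑ j, P i * M i j * Q j = ∑ j, (∑ i, P i * M i j) * Q j := by
        rw [Finset.sum_comm]; simp only [Finset.sum_mul]
    _ = v := by simp only [hcol, ← Finset.mul_sum, hQ, mul_one]

/-- Contestant's strategy mixing 1SS, 2SS, 3SS with equal weights. -/
noncomputable def alwaysSwitch : Fin 12 → ℝ := ![1/3, 0, 0, 0, 1/3, 0, 0, 0, 1/3, 0, 0, 0]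

theorem isMixedC_alwaysSwitch : IsMixedC alwaysSwitch := by
  refine ⟨fun i => ?_, ?_⟩
  · fin_cases i <;> norm_num [alwaysSwitch]
  · norm_num [alwaysSwitch, Fin.sum_univ_succ]

theorem sum_alwaysSwitch_mul_C (j : Fin 6) : ∑ i, alwaysSwitch i * C i j = 2/3 := by
  fin_cases j <;> norm_num [alwaysSwitch, C, Fin.sum_univ_succ]

theorem EM_C_alwaysSwitch {Q : Fin 6 → ℝ} (hQ : ∑ j, Q j = 1) :
    EM C alwaysSwitch Q = 2/3 :=
  sum_mul_sum_mul_eq_of_forall C alwaysSwitch Q _ sum_alwaysSwitch_mul_C hQ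

/-- In every Nash equilibrium Contestant wins with probability at least the
minimax value 2/3. -/
theorem nash_payoff_at_least_minimax :
    ∀ (H : Fin 12 → Fin 6 → ℝ) (P' : Fin 12 → ℝ) (Q' : Fin 6 → ℝ),
      IsNash H P' Q' → EM C P' Q' ≥ 2/3 := by
  rintro H P' Q' ⟨-, ⟨-, hQ'⟩, hBest, -⟩
  calc EM C P' Q' ≥ EM C alwaysSwitch Q' := hBest _ isMixedC_alwaysSwitch
    _ = 2/3 := EM_C_alwaysSwitch hQ'
end
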